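/- Let ρ(θ) (θ ∈ ℝ^p) be a smooth multi-parameter family of density matrices with spectral decomposition ρ(θ) = Σ_k p_k(θ)|w_k(θ)⟩⟨w_k(θ)|, p_k > 0. Then the matrix difference C_L(θ) − H_{SLD}(θ), whose quadratic form at v ∈ ℝ^p is 16 Σ_{j<k} (p_j p_k)/(p_j + p_k) |Σ_m v^m ⟨w_j^{(m)}|w_k⟩|^2, is positive semidefinite; hence H_{SLD}(θ) ≤ C_L(θ) in the Loewner order, with equality iff ⟨w_j^{(m)}|w_k⟩ = 0 for all m and all j ≠ k with p_j, p_k > 0. -/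

import Mathlib

/-!
Entrywise, `C_L − H_SLD` weights each pair `i < j` by
`(p_i + p_j) − (p_i − p_j)² / (p_i + p_j) = 4 p_i p_j / (p_i + p_j) > 0`, times the real part of the
rank-one matrix `b bᴴ` with `b_m = ⟨w_i^{(m)}|w_j⟩`. It is therefore a nonnegative combination of
positive semidefinite matrices, and it vanishes iff `b = 0` for every pair `i < j`. The pairs
`i > j` follow by differentiating `⟨w_i|w_j⟩ = δ_ij`, which makes `⟨w_i^{(m)}|w_j⟩` antihermitian.
-/

open scoped ComplexConjugate

namespace Matrix

variable {n : Type*}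

def reOuter (b : n → ℂ) : Matrix n n ℝ := of fun k l => (b k * conj (b l)).re

@[simp]
lemma reOuter_apply (b : n → ℂ) (k l : n) : reOuter b k l = (b k * conj (b l)).re := rfl

lemma reOuter_apply_self (b : n → ℂ) (k : n) : reOuter b k k = Complex.normSq (b k) := by
  rw [reOuter_apply, Complex.mul_conj, Complex.ofReal_re]

lemma isHermitian_reOuter (b : n → ℂ) : (reOuter b).IsHermitian := by
  ext k l
  simp [mul_comm]

lemma dotProduct_reOuter_mulVec [Fintype n] (b : n → ℂ) (v : n → ℝ) :
    v ⬝ᵥ reOuter b *ᵥ v = ‖∑ m, (v m : ℂ) * b m‖ ^ 2 := by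
  have hnorm (z : ℂ) : ‖z‖ ^ 2 = (z * conj z).re := by
    rw [Complex.mul_conj, Complex.ofReal_re, Complex.sq_norm]
  rw [hnorm, map_sum, Finset.sum_mul_sum, Complex.re_sum]
  simp only [dotProduct, mulVec, Finset.mul_sum, Complex.re_sum]
  refine Finset.sum_congr rfl fun k _ => Finset.sum_congr rfl fun l _ => ?_
  rw [map_mul, Complex.conj_ofReal, mul_mul_mul_comm, ← Complex.ofReal_mul,
    Complex.re_ofReal_mul, reOuter_apply]
  ring

lemma posSemidef_reOuter [Fintype n] (b : n → ℂ) : (reOuter b).PosSemidef :=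
  posSemidef_iff_dotProduct_mulVec.mpr
    ⟨isHermitian_reOuter b, fun v => by
      rw [star_trivial, dotProduct_reOuter_mulVec]; positivity⟩

lemma dotProduct_sum_smul_mulVec [Fintype n] {ι : Type*} [Fintype ι] (c : ι → ℝ)
    (M : ι → Matrix n n ℝ) (v : n → ℝ) :
    v ⬝ᵥ (∑ i, c i • M i) *ᵥ v = ∑ i, c i * (v ⬝ᵥ M i *ᵥ v) := by
  simp [sum_mulVec, dotProduct_sum, smul_mulVec, dotProduct_smul]

lemma sum_smul_reOuter_eq_zero_iff {ι : Type*} [Fintype ι] {c : ι → ℝ} (hc : ∀ i, 0 ≤ c i)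
    (b : ι → n → ℂ) : ∑ i, c i • reOuter (b i) = 0 ↔ ∀ i, c i = 0 ∨ b i = 0 := by
  constructor
  · intro h i
    have hdiag (m : n) : ∑ i, c i * Complex.normSq (b i m) = 0 := by
      simpa only [sum_apply, smul_apply, smul_eq_mul, reOuter_apply_self, zero_apply]
        using congrFun (congrFun h m) m
    refine or_iff_not_imp_left.mpr fun hci => funext fun m => ?_
    have hterm := (Finset.sum_eq_zero_iff_of_nonneg fun i _ =>
      mul_nonneg (hc i) (Complex.normSq_nonneg (b i m))).mp (hdiag m) i (Finset.mem_univ i)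
    exact Complex.normSq_eq_zero.mp ((mul_eq_zero.mp hterm).resolve_left hci)
  · intro h
    refine Finset.sum_eq_zero fun i _ => ?_
    rcases h i with h | h
    · rw [h, zero_smul]
    · ext k l
      simp [h]

end Matrix

section OrthonormalFamily

variable {ι 𝕜 E G : Type*} [RCLike 𝕜] [NormedAddCommGroup E] [InnerProductSpace 𝕜 E]
  [NormedSpace ℝ E] [NormedAddCommGroup G] [NormedSpace ℝ G] {w : ι → G → E} {x : G}

lemma inner_fderiv_add_inner_fderiv_eq_zero_of_orthonormal
    (hON : ∀ y, Orthonormal 𝕜 fun i => w i y) {i j : ι}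
    (hi : DifferentiableAt ℝ (w i) x) (hj : DifferentiableAt ℝ (w j) x) (h : G) :
    inner 𝕜 (w i x) (fderiv ℝ (w j) x h) + inner 𝕜 (fderiv ℝ (w i) x h) (w j x) = 0 := by
  classical
  have hconst : (fun y => inner 𝕜 (w i y) (w j y)) = fun _ => if i = j then (1 : 𝕜) else 0 :=
    funext fun y => orthonormal_iff_ite.mp (hON y) i j
  rw [← fderiv_inner_apply 𝕜 hi hj, hconst, fderiv_const_apply]
  rfl

lemma inner_fderiv_eq_zero_of_forall_lt [LinearOrder ι]
    (hON : ∀ y, Orthonormal 𝕜 fun i => w i y) (hw : ∀ i, DifferentiableAt ℝ (w i) x) (h : G)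
    (hlt : ∀ i j, i < j → inner 𝕜 (fderiv ℝ (w i) x h) (w j x) = 0) {i j : ι} (hij : i ≠ j) :
    inner 𝕜 (fderiv ℝ (w i) x h) (w j x) = 0 := by
  rcases hij.lt_or_gt with hij | hji
  · exact hlt i j hij
  · have hsum := inner_fderiv_add_inner_fderiv_eq_zero_of_orthonormal hON (hw j) (hw i) h
    rwa [hlt j i hji, add_zero, inner_eq_zero_symm] at hsum

end OrthonormalFamily

lemma add_sub_sq_sub_div_add {a b : ℝ} (h : a + b ≠ 0) :
    a + b - (a - b) ^ 2 / (a + b) = 4 * (a * b / (a + b)) := by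
  field_simp
  ring

theorem HSLD_le_CL_multi_general
    {d q : ℕ} (p : Fin d → (Fin q → ℝ) → ℝ)
    (w : Fin d → (Fin q → ℝ) → EuclideanSpace ℂ (Fin d))
    (hp : ∀ i x, 0 < p i x)
    (hwd : ∀ i, Differentiable ℝ (w i))
    (hON : ∀ x, Orthonormal ℂ (fun i => w i x)) :
    ∀ x : Fin q → ℝ,
      let pd : Fin q → Fin d → EuclideanSpace ℂ (Fin d) :=
        fun m i => fderiv ℝ (w i) x (Pi.single m 1)
      let H : Matrix (Fin q) (Fin q) ℝ := Matrix.of fun k l =>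
        (∑ i, (fderiv ℝ (p i) x (Pi.single k 1)) * (fderiv ℝ (p i) x (Pi.single l 1))
            / p i x)
        + 4 * (∑ i, ∑ j, if i < j then
            (((p i x - p j x) ^ 2 / (p i x + p j x) : ℝ) : ℂ) *
              ((inner ℂ (pd k i) (w j x) : ℂ) * (inner ℂ (w j x) (pd l i) : ℂ))
          else 0).re
      let CL : Matrix (Fin q) (Fin q) ℝ := Matrix.of fun k l =>
        (∑ i, (fderiv ℝ (p i) x (Pi.single k 1)) * (fderiv ℝ (p i) x (Pi.single l 1))
            / p i x)
        + 4 * (∑ i, ∑ j, if i < j then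
            ((p i x + p j x : ℝ) : ℂ) *
              ((inner ℂ (pd k i) (w j x) : ℂ) * (inner ℂ (w j x) (pd l i) : ℂ))
          else 0).re
      (∀ v : Fin q → ℝ,
        dotProduct v ((CL - H).mulVec v)
          = 16 * ∑ j, ∑ k, if j < k then
              (p j x * p k x / (p j x + p k x)) *
                ‖∑ m, (v m : ℂ) * (inner ℂ (pd m j) (w k x) : ℂ)‖ ^ 2
            else 0) ∧
      (CL - H).PosSemidef ∧
      (CL = H ↔ ∀ (m : Fin q) (j k : Fin d), j ≠ k →
        (inner ℂ (pd m j) (w k x) : ℂ) = 0) := by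
  intro x pd H CL
  let b : Fin d × Fin d → Fin q → ℂ := fun ij m => inner ℂ (pd m ij.1) (w ij.2 x)
  let c : Fin d × Fin d → ℝ := fun ij =>
    if ij.1 < ij.2 then 16 * (p ij.1 x * p ij.2 x / (p ij.1 x + p ij.2 x)) else 0
  have hc_pos {i j : Fin d} (hij : i < j) : 0 < c (i, j) := by
    have := hp i x; have := hp j x
    simp only [c, if_pos hij]; positivity
  have hc (ij : Fin d × Fin d) : 0 ≤ c ij := by
    by_cases hij : ij.1 < ij.2
    · exact (hc_pos hij).le
    · simp only [c, if_neg hij, le_refl]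
  have hdiff : CL - H = ∑ ij, c ij • Matrix.reOuter (b ij) := by
    ext k l
    simp only [CL, H, Matrix.sub_apply, Matrix.of_apply, add_sub_add_left_eq_sub, ← mul_sub,
      ← Complex.sub_re, ← Finset.sum_sub_distrib, Matrix.sum_apply, Matrix.smul_apply,
      Fintype.sum_prod_type, Complex.re_sum, Finset.mul_sum]
    refine Finset.sum_congr rfl fun i _ => Finset.sum_congr rfl fun j _ => ?_
    simp only [c, b, Matrix.reOuter_apply, smul_eq_mul]
    split_ifs
    · rw [← sub_mul, ← Complex.ofReal_sub, Complex.re_ofReal_mul,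
        add_sub_sq_sub_div_add (add_pos (hp i x) (hp j x)).ne',
        ← inner_conj_symm (w j x) (pd l i)]
      ring
    · simp
  refine ⟨fun v => ?_, hdiff ▸ Matrix.posSemidef_sum _ fun ij _ =>
    (Matrix.posSemidef_reOuter (b ij)).smul (hc ij), ?_⟩
  · rw [hdiff, Matrix.dotProduct_sum_smul_mulVec, Fintype.sum_prod_type, Finset.mul_sum]
    refine Finset.sum_congr rfl fun j _ => ?_
    rw [Finset.mul_sum]
    refine Finset.sum_congr rfl fun k _ => ?_
    simp only [c, Matrix.dotProduct_reOuter_mulVec]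
    split_ifs <;> ring
  rw [← sub_eq_zero, hdiff, Matrix.sum_smul_reOuter_eq_zero_iff hc]
  refine ⟨fun h m j k hjk => ?_, fun h ij => ?_⟩
  · refine inner_fderiv_eq_zero_of_forall_lt hON (fun i => hwd i x) _ (fun i j hij => ?_) hjk
    exact congrFun ((h (i, j)).resolve_left (hc_pos hij).ne') m
  · by_cases hij : ij.1 < ij.2
    · exact Or.inr (funext fun m => h m _ _ hij.ne)
    · exact Or.inl (if_neg hij)

/-- For a smooth multi-parameter family of density matrices with spectral decomposition
`ρ(θ) = Σ_k p_k(θ)|w_k(θ)⟩⟨w_k(θ)|`, `p_k > 0`, the matrix `C_L(θ) − H_{SLD}(θ)` has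
quadratic form `16 Σ_{j<k} p_j p_k/(p_j+p_k) |Σ_m vᵐ ⟨w_j^{(m)}|w_k⟩|²` at `v ∈ ℝᵖ`, is
positive semidefinite (so `H_{SLD}(θ) ≤ C_L(θ)` in the Loewner order), and equals zero
iff `⟨w_j^{(m)}|w_k⟩ = 0` for all `m` and all `j ≠ k`. -/
theorem HSLD_le_CL_multi
    {d q : ℕ} (p : Fin d → (Fin q → ℝ) → ℝ)
    (w : Fin d → (Fin q → ℝ) → EuclideanSpace ℂ (Fin d))
    (hp : ∀ i x, 0 < p i x)
    (hpd : ∀ i, Differentiable ℝ (p i))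
    (hwd : ∀ i, Differentiable ℝ (w i))
    (hON : ∀ x, Orthonormal ℂ (fun i => w i x)) :
    ∀ x : Fin q → ℝ,
      let pd : Fin q → Fin d → EuclideanSpace ℂ (Fin d) :=
        fun m i => fderiv ℝ (w i) x (Pi.single m 1)
      let H : Matrix (Fin q) (Fin q) ℝ := Matrix.of fun k l =>
        (∑ i, (fderiv ℝ (p i) x (Pi.single k 1)) * (fderiv ℝ (p i) x (Pi.single l 1))
            / p i x)
        + 4 * (∑ i, ∑ j, if i < j then
            (((p i x - p j x) ^ 2 / (p i x + p j x) : ℝ) : ℂ) *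
              ((inner ℂ (pd k i) (w j x) : ℂ) * (inner ℂ (w j x) (pd l i) : ℂ))
          else 0).re
      let CL : Matrix (Fin q) (Fin q) ℝ := Matrix.of fun k l =>
        (∑ i, (fderiv ℝ (p i) x (Pi.single k 1)) * (fderiv ℝ (p i) x (Pi.single l 1))
            / p i x)
        + 4 * (∑ i, ∑ j, if i < j then
            ((p i x + p j x : ℝ) : ℂ) *
              ((inner ℂ (pd k i) (w j x) : ℂ) * (inner ℂ (w j x) (pd l i) : ℂ))
          else 0).re
      (∀ v : Fin q → ℝ,
        dotProduct v ((CL - H).mulVec v)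
          = 16 * ∑ j, ∑ k, if j < k then
              (p j x * p k x / (p j x + p k x)) *
                ‖∑ m, (v m : ℂ) * (inner ℂ (pd m j) (w k x) : ℂ)‖ ^ 2
            else 0) ∧
      (CL - H).PosSemidef ∧
      (CL = H ↔ ∀ (m : Fin q) (j k : Fin d), j ≠ k →
        (inner ℂ (pd m j) (w k x) : ℂ) = 0) :=
  HSLD_le_CL_multi_general p w hp hwd hON
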